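/- arXiv:0912.5168 — 5 statements merged into one kernel-verified Lean document; each statement's English description precedes it below -/
import Mathlib

section
/- Hamilton's equations for H(r,θ,p_r,p_θ) = ½[p_r²/M_t + (p_θ + R p_r)²/(m r²)] + g r(M − m cos θ) + g R(m sin θ − M θ) are equivalent to the second-order system: μ_t(r̈ − Rθ̈) = r θ̇² + g(cos θ − μ) and r θ̈ = −2 ṙ θ̇ + R θ̇² − g sin θ, where μ = M/m and μ_t = M_t/m. -/
/-- Hamilton's equations for
`H(r,θ,p_r,p_θ) = ½[p_r²/M_t + (p_θ + R p_r)²/(m r²)] + g r(M − m cos θ) + g R(m sin θ − M θ)`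
(with the conjugate momenta `p_r = −M_t(Rθ̇ − ṙ)`, `p_θ = −R p_r + m r² θ̇`, and
the partial derivatives of `H` written explicitly) are equivalent to the second-order
system `μ_t(r̈ − Rθ̈) = r θ̇² + g(cos θ − μ)` and `r θ̈ = −2 ṙ θ̇ + R θ̇² − g sin θ`,
where `μ = M/m` and `μ_t = M_t/m`. -/
theorem sam_hamilton_equations_equiv
    (m M Mt R g : ℝ) (hm : 0 < m) (hMt : 0 < Mt)
    (μ μt : ℝ) (hμ : μ = M / m) (hμt : μt = Mt / m)
    (r θ r' θ' r'' θ'' pr pθ pr' pθ' : ℝ → ℝ)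
    (hrpos : ∀ t, 0 < r t)
    (hr : ∀ t, HasDerivAt r (r' t) t)
    (hr' : ∀ t, HasDerivAt r' (r'' t) t)
    (hθ : ∀ t, HasDerivAt θ (θ' t) t)
    (hθ' : ∀ t, HasDerivAt θ' (θ'' t) t)
    (hpr : ∀ t, pr t = -Mt * (R * θ' t - r' t))
    (hpθ : ∀ t, pθ t = -R * pr t + m * (r t) ^ 2 * θ' t)
    (hdpr : ∀ t, HasDerivAt pr (pr' t) t)
    (hdpθ : ∀ t, HasDerivAt pθ (pθ' t) t) :
    (∀ t,
        r' t = pr t / Mt + R * (pθ t + R * pr t) / (m * (r t) ^ 2) ∧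
        θ' t = (pθ t + R * pr t) / (m * (r t) ^ 2) ∧
        pr' t = (pθ t + R * pr t) ^ 2 / (m * (r t) ^ 3) - g * (M - m * Real.cos (θ t)) ∧
        pθ' t = -(g * (r t) * m * Real.sin (θ t) + g * R * (m * Real.cos (θ t) - M)))
    ↔
    (∀ t,
        μt * (r'' t - R * θ'' t) = r t * (θ' t) ^ 2 + g * (Real.cos (θ t) - μ) ∧
        r t * θ'' t = -2 * r' t * θ' t + R * (θ' t) ^ 2 - g * Real.sin (θ t)) := by
  have hm0 : m ≠ 0 := ne_of_gt hm
  have hMt0 : Mt ≠ 0 := ne_of_gt hMt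
  have hprfun : pr = fun t => -Mt * (R * θ' t - r' t) := funext hpr
  have hpθfun : pθ = fun t => -R * pr t + m * (r t) ^ 2 * θ' t := funext hpθ
  have hA : ∀ t, pr' t = -Mt * (R * θ'' t - r'' t) := by
    intro t
    have h1 : HasDerivAt (fun t => -Mt * (R * θ' t - r' t)) (-Mt * (R * θ'' t - r'' t)) t :=
      (((hθ' t).const_mul R).sub (hr' t)).const_mul (-Mt)
    exact (hprfun ▸ hdpr t).unique h1
  have hB : ∀ t, pθ' t = -R * pr' t + m * (2 * r t * r' t * θ' t + (r t) ^ 2 * θ'' t) := by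
    intro t
    have hr2 : HasDerivAt (fun t => m * (r t) ^ 2) (m * (2 * r t * r' t)) t := by
      have := ((hr t).pow 2).const_mul m
      exact this.congr_deriv (by push_cast; ring)
    have h2 : HasDerivAt (fun t => -R * pr t + m * (r t) ^ 2 * θ' t)
        (-R * pr' t + (m * (2 * r t * r' t) * θ' t + m * (r t) ^ 2 * θ'' t)) t :=
      ((hdpr t).const_mul (-R)).add (hr2.mul (hθ' t))
    have := (hpθfun ▸ hdpθ t).unique h2
    rw [this]; ring
  constructor
  · intro h t
    obtain ⟨_, _, e3, e4⟩ := h t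
    have hrt : r t ≠ 0 := ne_of_gt (hrpos t)
    rw [hA t, hpθ t] at e3
    rw [hB t, hA t] at e4
    have e3c : Mt * (r'' t - R * θ'' t)
        = m * r t * θ' t ^ 2 - g * (M - m * Real.cos (θ t)) := by
      field_simp at e3
      apply mul_left_cancel₀ (mul_ne_zero hm0 (pow_ne_zero 3 hrt))
      linear_combination e3
    constructor
    · rw [hμ, hμt]
      field_simp
      linear_combination e3c
    · apply mul_left_cancel₀ (mul_ne_zero hm0 hrt)
      linear_combination e4 + R * e3c
  · intro h t
    obtain ⟨e1, e2⟩ := h t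
    have hrt : r t ≠ 0 := ne_of_gt (hrpos t)
    rw [hμ, hμt] at e1
    have e1f : Mt * (r'' t - R * θ'' t)
        = m * r t * θ' t ^ 2 - g * (M - m * Real.cos (θ t)) := by
      field_simp at e1
      linear_combination e1
    refine ⟨?_, ?_, ?_, ?_⟩
    · rw [hpθ t, hpr t]
      field_simp
      ring
    · rw [hpθ t]
      field_simp
      ring
    · rw [hA t, hpθ t]
      field_simp
      linear_combination (m * r t ^ 3) * e1f
    · rw [hB t, hA t]
      linear_combination m * r t * e2 - R * e1f
end

section
/- If r(t) > 0 and θ(t) satisfy r θ̈ = −2ṙθ̇ + Rθ̇² − g sin θ and the mechanical energy E_m = ½ M_t(Rθ̇ − ṙ)² + ½ m r² θ̇² + m g(R sin θ − r cos θ) − M g(Rθ − r) is constant in time, and if Rθ̇ − ṙ is not identically zero on any subinterval, then μ_t(r̈ − Rθ̈) = rθ̇² + g(cos θ − μ) where μ = M/m, μ_t = M_t/m. -/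
open Set Filter Topology

/-- If `f'` agrees on a right neighborhood `(t, t+δ)` with a function `L` continuous at `t`,
then `f' t = L t`. -/
lemma sam_aux_deriv_right_limit (f f' L : ℝ → ℝ) (t δ : ℝ) (hδ : 0 < δ)
    (hf : ∀ u, HasDerivAt f (f' u) u)
    (hL : ContinuousAt L t)
    (hIoo : ∀ u ∈ Set.Ioo t (t + δ), f' u = L u) :
    f' t = L t := by
  have h1 : Tendsto (slope f t) (𝓝[>] t) (𝓝 (f' t)) :=
    (hasDerivAt_iff_tendsto_slope.mp (hf t)).mono_left
      (nhdsWithin_mono t (fun x hx => ne_of_gt hx))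
  have h2 : Tendsto (slope f t) (𝓝[>] t) (𝓝 (L t)) := by
    rw [Metric.tendsto_nhds]
    intro ε hε
    obtain ⟨δ', hδ', hδ'c⟩ := Metric.continuousAt_iff.mp hL ε hε
    have hmem : Ioo t (t + min δ δ') ∈ 𝓝[>] t :=
      Ioo_mem_nhdsGT_of_mem ⟨le_refl t, by simp [hδ, hδ']⟩
    filter_upwards [hmem] with s hs
    obtain ⟨c, hc, hceq⟩ := exists_hasDerivAt_eq_slope f f' hs.1
      (fun x _ => (hf x).continuousAt.continuousWithinAt) (fun x _ => hf x)
    have hcδ : c ∈ Ioo t (t + δ) :=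
      ⟨hc.1, lt_of_lt_of_le (hc.2.trans hs.2) (by simp)⟩
    have hcd : dist c t < δ' := by
      rw [Real.dist_eq, abs_of_pos (by linarith [hc.1])]
      have h3 := hc.2.trans hs.2
      have h4 := min_le_right δ δ'
      linarith
    rw [slope_def_field, ← hceq, hIoo c hcδ]
    exact hδ'c hcd
  exact tendsto_nhds_unique h1 h2

/-- Between two zeros of `f` with a nonzero point in between, there is an interior point
where `f ≠ 0` and `f' = 0`. -/
lemma sam_aux_rolle_nonzero (f f' : ℝ → ℝ) (hf : ∀ u, HasDerivAt f (f' u) u)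
    (a b c : ℝ) (hab : a < b) (ha : f a = 0) (hb : f b = 0)
    (hc : c ∈ Set.Ioo a b) (hfc : f c ≠ 0) :
    ∃ ξ ∈ Set.Ioo a b, f ξ ≠ 0 ∧ f' ξ = 0 := by
  have hcont : ContinuousOn f (Icc a b) :=
    fun x _ => (hf x).continuousAt.continuousWithinAt
  have hcIcc : c ∈ Icc a b := Ioo_subset_Icc_self hc
  rcases hfc.lt_or_gt with hneg | hpos
  · obtain ⟨ξ, hξmem, hmin⟩ := isCompact_Icc.exists_isMinOn (nonempty_Icc.mpr hab.le) hcont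
    have hξc : f ξ ≤ f c := hmin hcIcc
    have hξne : f ξ ≠ 0 := by intro h; rw [h] at hξc; linarith
    have hξIoo : ξ ∈ Ioo a b := by
      rcases eq_or_lt_of_le hξmem.1 with h | h1
      · exact absurd (h ▸ ha) hξne
      rcases eq_or_lt_of_le hξmem.2 with h | h2
      · exact absurd (h ▸ hb) hξne
      exact ⟨h1, h2⟩
    refine ⟨ξ, hξIoo, hξne, ?_⟩
    exact (hmin.isLocalMin (Icc_mem_nhds hξIoo.1 hξIoo.2)).hasDerivAt_eq_zero (hf ξ)
  · obtain ⟨ξ, hξmem, hmax⟩ := isCompact_Icc.exists_isMaxOn (nonempty_Icc.mpr hab.le) hcont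
    have hξc : f c ≤ f ξ := hmax hcIcc
    have hξne : f ξ ≠ 0 := by intro h; rw [h] at hξc; linarith
    have hξIoo : ξ ∈ Ioo a b := by
      rcases eq_or_lt_of_le hξmem.1 with h | h1
      · exact absurd (h ▸ ha) hξne
      rcases eq_or_lt_of_le hξmem.2 with h | h2
      · exact absurd (h ▸ hb) hξne
      exact ⟨h1, h2⟩
    refine ⟨ξ, hξIoo, hξne, ?_⟩
    exact (hmax.isLocalMax (Icc_mem_nhds hξIoo.1 hξIoo.2)).hasDerivAt_eq_zero (hf ξ)

/-- If `r(t) > 0` and `θ(t)` satisfy `r θ̈ = −2ṙθ̇ + Rθ̇² − g sin θ` and the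
mechanical energy `E_m = ½ M_t(Rθ̇ − ṙ)² + ½ m r² θ̇² + m g(R sin θ − r cos θ) − M g(Rθ − r)`
is constant in time, and if `Rθ̇ − ṙ` is not identically zero on any subinterval, then
`μ_t(r̈ − Rθ̈) = rθ̇² + g(cos θ − μ)` where `μ = M/m`, `μ_t = M_t/m`. -/
theorem sam_energy_conservation_gives_radial_equation
    (m M Mt R g : ℝ) (hm : 0 < m) (hMt : 0 < Mt)
    (μ μt : ℝ) (hμ : μ = M / m) (hμt : μt = Mt / m)
    (r θ r' θ' r'' θ'' : ℝ → ℝ)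
    (hrpos : ∀ t, 0 < r t)
    (hr : ∀ t, HasDerivAt r (r' t) t)
    (hr' : ∀ t, HasDerivAt r' (r'' t) t)
    (hθ : ∀ t, HasDerivAt θ (θ' t) t)
    (hθ' : ∀ t, HasDerivAt θ' (θ'' t) t)
    (hang : ∀ t, r t * θ'' t = -2 * r' t * θ' t + R * (θ' t) ^ 2 - g * Real.sin (θ t))
    (Em : ℝ → ℝ)
    (hEm : ∀ t, Em t = (1/2) * Mt * (R * θ' t - r' t) ^ 2 + (1/2) * m * (r t) ^ 2 * (θ' t) ^ 2
        + m * g * (R * Real.sin (θ t) - r t * Real.cos (θ t)) - M * g * (R * θ t - r t))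
    (hconst : ∀ t s, Em t = Em s)
    (hnontriv : ∀ a b : ℝ, a < b → ∃ t ∈ Set.Ioo a b, R * θ' t - r' t ≠ 0) :
    ∀ t, μt * (r'' t - R * θ'' t) = r t * (θ' t) ^ 2 + g * (Real.cos (θ t) - μ) := by
  -- Notation: f = Rθ' − r', f' = Rθ'' − r'', C = m r θ'² + m g cos θ − M g.
  set f : ℝ → ℝ := fun u => R * θ' u - r' u with hfdef
  set f' : ℝ → ℝ := fun u => R * θ'' u - r'' u with hf'def
  set C : ℝ → ℝ := fun u => m * r u * (θ' u) ^ 2 + m * g * Real.cos (θ u) - M * g with hCdef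
  have hfd : ∀ u, HasDerivAt f (f' u) u := fun u => ((hθ' u).const_mul R).sub (hr' u)
  have hrc : Continuous r := by
    rw [continuous_iff_continuousAt]; exact fun u => (hr u).continuousAt
  have hθc : Continuous θ := by
    rw [continuous_iff_continuousAt]; exact fun u => (hθ u).continuousAt
  have hθ'c : Continuous θ' := by
    rw [continuous_iff_continuousAt]; exact fun u => (hθ' u).continuousAt
  have hCc : Continuous C := by
    apply Continuous.sub; apply Continuous.add
    · exact (continuous_const.mul hrc).mul (hθ'c.pow 2)
    · exact continuous_const.mul (Real.continuous_cos.comp hθc)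
    · exact continuous_const
  -- Key identity from energy conservation: f * (Mt f' + C) = 0 everywhere.
  have key : ∀ u, f u * (Mt * f' u + C u) = 0 := by
    intro u
    have hb : HasDerivAt (fun t => R * θ' t - r' t) (R * θ'' u - r'' u) u :=
      ((hθ' u).const_mul R).sub (hr' u)
    have h1 := (hb.pow 2).const_mul ((1:ℝ)/2 * Mt)
    have h2 := ((((hr u).pow 2).const_mul ((1:ℝ)/2 * m)).mul ((hθ' u).pow 2))
    have h3 := (((hθ u).sin.const_mul R).sub ((hr u).mul (hθ u).cos)).const_mul (m * g)
    have h4 := ((((hθ u).const_mul R).sub (hr u))).const_mul (M * g)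
    have hEeq : Em = fun t => (1/2) * Mt * (R * θ' t - r' t) ^ 2
        + (1/2) * m * (r t) ^ 2 * (θ' t) ^ 2
        + m * g * (R * Real.sin (θ t) - r t * Real.cos (θ t)) - M * g * (R * θ t - r t) :=
      funext hEm
    have hbig := ((h1.add h2).add h3).sub h4
    replace hbig := hbig.congr_of_eventuallyEq (f₁ := Em) (Filter.Eventually.of_forall fun t => by
      rw [hEm t]; simp only [Pi.add_apply, Pi.sub_apply, Pi.mul_apply, Pi.pow_apply])
    simp only [Pi.pow_apply] at hbig
    have h0 : HasDerivAt Em 0 u := by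
      have hc : Em = fun _ => Em 0 := funext fun s => hconst s 0
      rw [hc]; exact hasDerivAt_const u (Em 0)
    have hD := hbig.unique h0
    show (R * θ' u - r' u) * (Mt * (R * θ'' u - r'' u)
        + (m * r u * (θ' u) ^ 2 + m * g * Real.cos (θ u) - M * g)) = 0
    linear_combination hD - (m * r u * θ' u) * hang u
  -- Main step: Mt f' + C = 0 everywhere.
  have main : ∀ u, Mt * f' u + C u = 0 := by
    intro u
    by_cases hfu : f u ≠ 0
    · rcases mul_eq_zero.mp (key u) with h | h
      · exact absurd h hfu
      · exact h
    push_neg at hfu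
    by_cases hA : ∃ δ > 0, ∀ s ∈ Ioo u (u + δ), f s ≠ 0
    · -- f is nonzero on a right neighborhood, so f' = -C/Mt there, pass to the limit.
      obtain ⟨δ, hδ, hne⟩ := hA
      have hfL : f' u = -C u / Mt := by
        apply sam_aux_deriv_right_limit f f' (fun s => -C s / Mt) u δ hδ hfd
        · exact ((hCc.neg.div_const Mt).continuousAt)
        · intro s hs
          have hk := key s
          have hns := hne s hs
          have : Mt * f' s + C s = 0 := by
            rcases mul_eq_zero.mp hk with h | h
            · exact absurd h hns
            · exact h
          field_simp
          linarith
      rw [hfL]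
      field_simp
      ring
    · -- zeros of f accumulate at u from the right
      push_neg at hA
      have hzero : ∀ δ > (0:ℝ), ∃ s ∈ Ioo u (u + δ), f s = 0 := by
        intro δ hδ
        obtain ⟨s, hs, hfs⟩ := hA δ hδ
        exact ⟨s, hs, hfs⟩
      -- (i) f' u = 0
      have hf'u : f' u = 0 := by
        set Z : Set ℝ := {s | u < s ∧ f s = 0} with hZdef
        have hclo : u ∈ closure Z := by
          rw [Metric.mem_closure_iff]
          intro ε hε
          obtain ⟨s, hs, hfs⟩ := hzero ε hε
          exact ⟨s, ⟨hs.1, hfs⟩, by rw [Real.dist_eq, abs_of_neg (by linarith [hs.1])]; linarith [hs.2]⟩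
        have hne : (𝓝[Z] u).NeBot := mem_closure_iff_nhdsWithin_neBot.mp hclo
        have t1 : Tendsto (slope f u) (𝓝[Z] u) (𝓝 (f' u)) :=
          (hasDerivAt_iff_tendsto_slope.mp (hfd u)).mono_left
            (nhdsWithin_mono u (fun x hx => ne_of_gt hx.1))
        have t2 : Tendsto (slope f u) (𝓝[Z] u) (𝓝 0) := by
          apply tendsto_const_nhds.congr'
          filter_upwards [self_mem_nhdsWithin] with s hs
          rw [slope_def_field, hs.2, hfu]
          simp
        exact tendsto_nhds_unique t1 t2
      -- (ii) C u = 0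
      have hCu : C u = 0 := by
        have hclo : u ∈ closure {s | C s = 0} := by
          rw [Metric.mem_closure_iff]
          intro ε hε
          obtain ⟨z, hz, hfz⟩ := hzero ε hε
          obtain ⟨c, hcz, hfc⟩ := hnontriv u z hz.1
          obtain ⟨ξ, hξz, hξne, hξ'⟩ :=
            sam_aux_rolle_nonzero f f' hfd u z c hz.1 hfu hfz hcz hfc
          have hCξ : C ξ = 0 := by
            have hk := key ξ
            rcases mul_eq_zero.mp hk with h | h
            · exact absurd h hξne
            · rw [hξ'] at h; linarith
          refine ⟨ξ, hCξ, ?_⟩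
          rw [Real.dist_eq, abs_of_neg (by linarith [hξz.1])]
          linarith [hξz.2, hz.2]
        have hcl : IsClosed {s | C s = 0} := isClosed_eq hCc continuous_const
        rw [hcl.closure_eq] at hclo
        exact hclo
      rw [hf'u, hCu]; ring
  -- Conclude
  intro t
  have h := main t
  have hC : C t = m * r t * (θ' t) ^ 2 + m * g * Real.cos (θ t) - M * g := rfl
  have hf' : f' t = R * θ'' t - r'' t := rfl
  rw [hC, hf'] at h
  rw [hμ, hμt]
  field_simp
  linarith
end

section
/- The curve z_{π,R}(t) = (g(M+m)/2)·(t(1−t)/M_t, 2π/(g(M+m)), 1−2t, R(2t−1)) in coordinates (q₁, q₂, p₁, p₂) = (r, θ, p_r, p_θ) is a solution of Hamilton's equations for H = ½[p₁²/M_t + (p₂ + R p₁)²/(m q₁²)] + g q₁(M − m cos q₂) − g R(M q₂ − m sin q₂). -/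
/-- The curve
`z_{π,R}(t) = (g(M+m)/2)·(t(1−t)/M_t, 2π/(g(M+m)), 1−2t, R(2t−1))`
in coordinates `(q₁, q₂, p₁, p₂)` is a solution of Hamilton's equations for
`H = ½[p₁²/M_t + (p₂ + R p₁)²/(m q₁²)] + g q₁(M − m cos q₂) − g R(M q₂ − m sin q₂)`,
on an interval where `q₁(t) ≠ 0`. Hamilton's equations are written with the partial
derivatives of `H` made explicit. -/
theorem sam_particular_solution_pi
    (m M Mt R g : ℝ) (hm : m ≠ 0) (hMt : Mt ≠ 0)
    (q₁ q₂ p₁ p₂ : ℝ → ℝ)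
    (hq₁ : ∀ t, q₁ t = g * (M + m) / 2 * (t * (1 - t) / Mt))
    (hq₂ : ∀ t, q₂ t = g * (M + m) / 2 * (2 * Real.pi / (g * (M + m))))
    (hp₁ : ∀ t, p₁ t = g * (M + m) / 2 * (1 - 2 * t))
    (hp₂ : ∀ t, p₂ t = g * (M + m) / 2 * (R * (2 * t - 1))) :
    ∀ t, q₁ t ≠ 0 →
      HasDerivAt q₁ (p₁ t / Mt + R * (p₂ t + R * p₁ t) / (m * (q₁ t) ^ 2)) t ∧
      HasDerivAt q₂ ((p₂ t + R * p₁ t) / (m * (q₁ t) ^ 2)) t ∧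
      HasDerivAt p₁ (-(-(p₂ t + R * p₁ t) ^ 2 / (m * (q₁ t) ^ 3)
          + g * (M - m * Real.cos (q₂ t)))) t ∧
      HasDerivAt p₂ (-(g * q₁ t * (m * Real.sin (q₂ t))
          - g * R * (M - m * Real.cos (q₂ t)))) t := by
  intro t ht
  have hK : g * (M + m) ≠ 0 := by
    intro h
    apply ht
    rw [hq₁, h]; ring
  have hpi : q₂ t = Real.pi := by
    rw [hq₂]; field_simp; exact div_self hK
  have hzero : p₂ t + R * p₁ t = 0 := by rw [hp₁, hp₂]; ring
  have hq₁' : q₁ = fun s => g * (M + m) / 2 * (s * (1 - s) / Mt) := funext hq₁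
  have hq₂' : q₂ = fun _ => g * (M + m) / 2 * (2 * Real.pi / (g * (M + m))) := funext hq₂
  have hp₁' : p₁ = fun s => g * (M + m) / 2 * (1 - 2 * s) := funext hp₁
  have hp₂' : p₂ = fun s => g * (M + m) / 2 * (R * (2 * s - 1)) := funext hp₂
  refine ⟨?_, ?_, ?_, ?_⟩
  · have h1 : HasDerivAt (fun s : ℝ => g * (M + m) / 2 * (s * (1 - s) / Mt))
        (g * (M + m) / 2 * ((1 - 2 * t) / Mt)) t := by
      have := (((hasDerivAt_id t).mul ((hasDerivAt_const t (1:ℝ)).sub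
        (hasDerivAt_id t))).div_const Mt).const_mul (g * (M + m) / 2)
      refine this.congr_deriv ?_
      simp only [id_eq, Pi.sub_apply]; ring
    rw [show p₁ t / Mt + R * (p₂ t + R * p₁ t) / (m * (q₁ t) ^ 2)
        = g * (M + m) / 2 * ((1 - 2 * t) / Mt) from by rw [hzero, hp₁]; ring, hq₁']
    exact h1
  · rw [hzero, hq₂']
    simpa using hasDerivAt_const t _
  · have h1 : HasDerivAt (fun s : ℝ => g * (M + m) / 2 * (1 - 2 * s))
        (g * (M + m) / 2 * (-2)) t := by
      have := ((hasDerivAt_const t (1:ℝ)).sub ((hasDerivAt_id t).const_mul 2)).const_mul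
        (g * (M + m) / 2)
      refine this.congr_deriv ?_
      ring
    rw [show -(-(p₂ t + R * p₁ t) ^ 2 / (m * (q₁ t) ^ 3) + g * (M - m * Real.cos (q₂ t)))
        = g * (M + m) / 2 * (-2) from by rw [hzero, hpi]; simp, hp₁']
    exact h1
  · have h1 : HasDerivAt (fun s : ℝ => g * (M + m) / 2 * (R * (2 * s - 1)))
        (g * (M + m) / 2 * (R * 2)) t := by
      have := ((((hasDerivAt_id t).const_mul (2:ℝ)).sub (hasDerivAt_const t 1)).const_mul
        R).const_mul (g * (M + m) / 2)
      refine this.congr_deriv ?_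
      ring
    rw [show -(g * q₁ t * (m * Real.sin (q₂ t)) - g * R * (M - m * Real.cos (q₂ t)))
        = g * (M + m) / 2 * (R * 2) from by rw [hpi]; simp; ring, hp₂']
    exact h1
end

section
/- The curve z_{0,R}(t) = (g(M−m)/2)·(t(1−t)/M_t, 0, 1−2t, R(2t−1)) in coordinates (q₁, q₂, p₁, p₂) is a solution of Hamilton's equations for the SAM Hamiltonian H = ½[p₁²/M_t + (p₂ + R p₁)²/(m q₁²)] + g q₁(M − m cos q₂) − g R(M q₂ − m sin q₂). -/
/-- The curve
`z_{0,R}(t) = (g(M−m)/2)·(t(1−t)/M_t, 0, 1−2t, R(2t−1))`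
in coordinates `(q₁, q₂, p₁, p₂)` is a solution of Hamilton's equations for the SAM
Hamiltonian `H = ½[p₁²/M_t + (p₂ + R p₁)²/(m q₁²)] + g q₁(M − m cos q₂) − g R(M q₂ − m sin q₂)`,
on an interval where `q₁(t) ≠ 0`. Hamilton's equations are written with the partial
derivatives of `H` made explicit. -/
theorem sam_particular_solution_zero
    (m M Mt R g : ℝ) (hm : m ≠ 0) (hMt : Mt ≠ 0) (hMm : M ≠ m)
    (q₁ q₂ p₁ p₂ : ℝ → ℝ)
    (hq₁ : ∀ t, q₁ t = g * (M - m) / 2 * (t * (1 - t) / Mt))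
    (hq₂ : ∀ t, q₂ t = 0)
    (hp₁ : ∀ t, p₁ t = g * (M - m) / 2 * (1 - 2 * t))
    (hp₂ : ∀ t, p₂ t = g * (M - m) / 2 * (R * (2 * t - 1))) :
    ∀ t, q₁ t ≠ 0 →
      HasDerivAt q₁ (p₁ t / Mt + R * (p₂ t + R * p₁ t) / (m * (q₁ t) ^ 2)) t ∧
      HasDerivAt q₂ ((p₂ t + R * p₁ t) / (m * (q₁ t) ^ 2)) t ∧
      HasDerivAt p₁ (-(-(p₂ t + R * p₁ t) ^ 2 / (m * (q₁ t) ^ 3)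
          + g * (M - m * Real.cos (q₂ t)))) t ∧
      HasDerivAt p₂ (-(g * q₁ t * (m * Real.sin (q₂ t))
          - g * R * (M - m * Real.cos (q₂ t)))) t := by
  have hq₁' : q₁ = fun t => g * (M - m) / 2 * (t * (1 - t) / Mt) := funext hq₁
  have hq₂' : q₂ = fun _ => (0 : ℝ) := funext hq₂
  have hp₁' : p₁ = fun t => g * (M - m) / 2 * (1 - 2 * t) := funext hp₁
  have hp₂' : p₂ = fun t => g * (M - m) / 2 * (R * (2 * t - 1)) := funext hp₂
  intro t ht
  have key : p₂ t + R * p₁ t = 0 := by rw [hp₁, hp₂]; ring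
  refine ⟨?_, ?_, ?_, ?_⟩
  · have h : HasDerivAt (fun t : ℝ => g * (M - m) / 2 * (t * (1 - t) / Mt))
        (g * (M - m) / 2 * ((1 * (1 - t) + t * (0 - 1)) / Mt)) t := by
      simpa using (((hasDerivAt_id t).mul ((hasDerivAt_const t 1).sub (hasDerivAt_id t))).div_const Mt).const_mul (g * (M - m) / 2)
    rw [key, hp₁, hq₁']
    convert h using 1
    simp only [mul_zero, zero_div, add_zero]
    ring
  · rw [key, hq₂']
    simpa using hasDerivAt_const t (0 : ℝ)
  · have h : HasDerivAt (fun t : ℝ => g * (M - m) / 2 * (1 - 2 * t))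
        (g * (M - m) / 2 * (0 - 2 * 1)) t := by
      simpa using ((hasDerivAt_const t (1:ℝ)).sub ((hasDerivAt_id t).const_mul 2)).const_mul (g * (M - m) / 2)
    rw [key, hq₂, hp₁']
    convert h using 1
    norm_num
  · have h : HasDerivAt (fun t : ℝ => g * (M - m) / 2 * (R * (2 * t - 1)))
        (g * (M - m) / 2 * (R * (2 * 1 - 0))) t := by
      simpa using ((((hasDerivAt_id t).const_mul 2).sub (hasDerivAt_const t 1)).const_mul R).const_mul (g * (M - m) / 2)
    rw [hq₂, hp₂']
    convert h using 1
    norm_num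
    ring
end

section
/- For the pulley-less SAM with μ = 3 (M = 3m), the function I = g q₁² c² s + p₂(p₁ q₁ c − 2 p₂ s)/(4 m² q₁), with c = cos(q₂/2), s = sin(q₂/2), is a first integral: its Poisson bracket with H_w = ½(p₁²/M_t + p₂²/(m q₁²)) + g q₁(M − m cos q₂) vanishes identically when M = 3m and M_t = M + m = 4m. -/
/-- For the pulley-less SAM with `μ = 3` (`M = 3m`, `M_t = 4m`), the function
`I = g q₁² c² s + p₂(p₁ q₁ c − 2 p₂ s)/(4 m² q₁)`, with `c = cos(q₂/2)`, `s = sin(q₂/2)`,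
is a first integral: its Poisson bracket with
`H_w = ½(p₁²/M_t + p₂²/(m q₁²)) + g q₁(M − m cos q₂)` vanishes identically. -/
theorem sam_mu3_first_integral
    (m M Mt g : ℝ) (hm : 0 < m) (hM : M = 3 * m) (hMt : Mt = 4 * m)
    (H I : ℝ → ℝ → ℝ → ℝ → ℝ)
    (hH : ∀ q₁ q₂ p₁ p₂, H q₁ q₂ p₁ p₂ =
      (1/2) * (p₁ ^ 2 / Mt + p₂ ^ 2 / (m * q₁ ^ 2)) + g * q₁ * (M - m * Real.cos q₂))
    (hI : ∀ q₁ q₂ p₁ p₂, I q₁ q₂ p₁ p₂ =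
      g * q₁ ^ 2 * Real.cos (q₂/2) ^ 2 * Real.sin (q₂/2)
        + p₂ * (p₁ * q₁ * Real.cos (q₂/2) - 2 * p₂ * Real.sin (q₂/2)) / (4 * m ^ 2 * q₁)) :
    ∀ q₁ q₂ p₁ p₂ : ℝ, q₁ ≠ 0 →
      deriv (fun x => I x q₂ p₁ p₂) q₁ * deriv (fun x => H q₁ q₂ x p₂) p₁
        + deriv (fun x => I q₁ x p₁ p₂) q₂ * deriv (fun x => H q₁ q₂ p₁ x) p₂
        - deriv (fun x => I q₁ q₂ x p₂) p₁ * deriv (fun x => H x q₂ p₁ p₂) q₁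
        - deriv (fun x => I q₁ q₂ p₁ x) p₂ * deriv (fun x => H q₁ x p₁ p₂) q₂ = 0 := by
  subst hM hMt
  intro q₁ q₂ p₁ p₂ hq₁
  have hm' : m ≠ 0 := ne_of_gt hm
  have hmq : m * q₁ ^ 2 ≠ 0 := by positivity
  have hmq4 : 4 * m ^ 2 * q₁ ≠ 0 := by
    simp [hm', hq₁]
  set c := Real.cos (q₂/2) with hc
  set s := Real.sin (q₂/2) with hs
  simp only [hH, hI]
  -- derivative of H in p₁
  have dHp1 : deriv (fun x : ℝ =>
      (1/2) * (x ^ 2 / (4*m) + p₂ ^ 2 / (m * q₁ ^ 2)) + g * q₁ * (3*m - m * Real.cos q₂)) p₁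
      = p₁ / (4*m) := by
    have h := ((((hasDerivAt_pow 2 p₁).div_const (4*m)).add_const
        (p₂ ^ 2 / (m * q₁ ^ 2))).const_mul ((1:ℝ)/2)).add_const
        (g * q₁ * (3*m - m * Real.cos q₂))
    rw [h.deriv]; push_cast; ring
  -- derivative of H in p₂
  have dHp2 : deriv (fun x : ℝ =>
      (1/2) * (p₁ ^ 2 / (4*m) + x ^ 2 / (m * q₁ ^ 2)) + g * q₁ * (3*m - m * Real.cos q₂)) p₂
      = p₂ / (m * q₁ ^ 2) := by
    have h := ((((hasDerivAt_const p₂ (p₁ ^ 2 / (4*m))).add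
        ((hasDerivAt_pow 2 p₂).div_const (m * q₁ ^ 2))).const_mul ((1:ℝ)/2)).add_const
        (g * q₁ * (3*m - m * Real.cos q₂)))
    refine h.deriv.trans ?_; push_cast; ring
  -- derivative of H in q₁
  have dHq1 : deriv (fun x : ℝ =>
      (1/2) * (p₁ ^ 2 / (4*m) + p₂ ^ 2 / (m * x ^ 2)) + g * x * (3*m - m * Real.cos q₂)) q₁
      = -(p₂ ^ 2 / (m * q₁ ^ 3)) + g * (3*m - m * Real.cos q₂) := by
    have hdiv : HasDerivAt (fun x : ℝ => p₂ ^ 2 / (m * x ^ 2))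
        ((0 * (m * q₁ ^ 2) - p₂ ^ 2 * (m * (↑2 * q₁ ^ 1))) / (m * q₁ ^ 2) ^ 2) q₁ :=
      (hasDerivAt_const q₁ (p₂ ^ 2)).div ((hasDerivAt_pow 2 q₁).const_mul m) hmq
    have h := (((hasDerivAt_const q₁ (p₁ ^ 2 / (4*m))).add hdiv).const_mul ((1:ℝ)/2)).add
        (((hasDerivAt_id' q₁).const_mul g).mul_const (3*m - m * Real.cos q₂))
    refine h.deriv.trans ?_; push_cast; field_simp; ring
  -- derivative of H in q₂
  have dHq2 : deriv (fun x : ℝ =>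
      (1/2) * (p₁ ^ 2 / (4*m) + p₂ ^ 2 / (m * q₁ ^ 2)) + g * q₁ * (3*m - m * Real.cos x)) q₂
      = g * q₁ * (m * Real.sin q₂) := by
    have h := (hasDerivAt_const q₂ ((1/2) * (p₁ ^ 2 / (4*m) + p₂ ^ 2 / (m * q₁ ^ 2)))).add
        (((hasDerivAt_const q₂ (3*m)).sub ((Real.hasDerivAt_cos q₂).const_mul m)).const_mul (g * q₁))
    refine h.deriv.trans ?_; ring
  -- derivatives of the half-angle functions
  have hhalf : HasDerivAt (fun x : ℝ => x / 2) (1 / 2) q₂ := (hasDerivAt_id' q₂).div_const 2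
  have hcos : HasDerivAt (fun x : ℝ => Real.cos (x / 2)) (-s * (1/2)) q₂ := hhalf.cos
  have hsin : HasDerivAt (fun x : ℝ => Real.sin (x / 2)) (c * (1/2)) q₂ := hhalf.sin
  -- derivative of I in q₁
  have dIq1 : deriv (fun x : ℝ =>
      g * x ^ 2 * c ^ 2 * s + p₂ * (p₁ * x * c - 2 * p₂ * s) / (4 * m ^ 2 * x)) q₁
      = 2 * g * q₁ * c ^ 2 * s + p₂ ^ 2 * s / (2 * m ^ 2 * q₁ ^ 2) := by
    have hnum : HasDerivAt (fun x : ℝ => p₂ * (p₁ * x * c - 2 * p₂ * s)) (p₂ * (p₁ * c)) q₁ := by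
      have := ((((hasDerivAt_id' q₁).const_mul p₁).mul_const c).sub_const (2 * p₂ * s)).const_mul p₂
      simpa using this
    have hden : HasDerivAt (fun x : ℝ => 4 * m ^ 2 * x) (4 * m ^ 2) q₁ := by
      simpa using (hasDerivAt_id' q₁).const_mul (4 * m ^ 2)
    have h := ((((hasDerivAt_pow 2 q₁).const_mul g).mul_const (c ^ 2)).mul_const s).add
        (hnum.div hden hmq4)
    refine h.deriv.trans ?_; push_cast; field_simp; ring
  -- derivative of I in q₂
  have dIq2 : deriv (fun x : ℝ =>
      g * q₁ ^ 2 * Real.cos (x/2) ^ 2 * Real.sin (x/2)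
        + p₂ * (p₁ * q₁ * Real.cos (x/2) - 2 * p₂ * Real.sin (x/2)) / (4 * m ^ 2 * q₁)) q₂
      = g * q₁ ^ 2 * (c ^ 3 / 2 - c * s ^ 2)
        - p₂ * (p₁ * q₁ * s + 2 * p₂ * c) / (8 * m ^ 2 * q₁) := by
    have h := ((((hcos.pow 2).const_mul (g * q₁ ^ 2)).mul hsin).add
        ((((hcos.const_mul (p₁ * q₁)).sub (hsin.const_mul (2 * p₂))).const_mul p₂).div_const
          (4 * m ^ 2 * q₁)))
    refine h.deriv.trans ?_; simp only [Pi.pow_apply]; push_cast; rw [← hc, ← hs]; field_simp; ring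
  -- derivative of I in p₁
  have dIp1 : deriv (fun x : ℝ =>
      g * q₁ ^ 2 * c ^ 2 * s + p₂ * (x * q₁ * c - 2 * p₂ * s) / (4 * m ^ 2 * q₁)) p₁
      = p₂ * c / (4 * m ^ 2) := by
    have h := (hasDerivAt_const p₁ (g * q₁ ^ 2 * c ^ 2 * s)).add
        (((((hasDerivAt_id' p₁).mul_const q₁).mul_const c).sub_const
          (2 * p₂ * s)).const_mul p₂ |>.div_const (4 * m ^ 2 * q₁))
    refine h.deriv.trans ?_; field_simp; ring
  -- derivative of I in p₂
  have dIp2 : deriv (fun x : ℝ =>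
      g * q₁ ^ 2 * c ^ 2 * s + x * (p₁ * q₁ * c - 2 * x * s) / (4 * m ^ 2 * q₁)) p₂
      = (p₁ * q₁ * c - 4 * p₂ * s) / (4 * m ^ 2 * q₁) := by
    have hnum : HasDerivAt (fun x : ℝ => x * (p₁ * q₁ * c - 2 * x * s))
        (1 * (p₁ * q₁ * c - 2 * p₂ * s) + p₂ * (0 - 2 * 1 * s)) p₂ :=
      (hasDerivAt_id' p₂).mul ((hasDerivAt_const p₂ (p₁ * q₁ * c)).sub
        (((hasDerivAt_id' p₂).const_mul 2).mul_const s))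
    have h := (hasDerivAt_const p₂ (g * q₁ ^ 2 * c ^ 2 * s)).add
        (hnum.div_const (4 * m ^ 2 * q₁))
    refine h.deriv.trans ?_; field_simp; ring
  rw [dHp1, dHp2, dHq1, dHq2, dIq1, dIq2, dIp1, dIp2]
  -- double-angle identities
  have hsin2 := Real.sin_two_mul (q₂/2)
  have hcos2 := Real.cos_two_mul (q₂/2)
  rw [show 2 * (q₂/2) = q₂ by ring] at hsin2 hcos2
  rw [hsin2, hcos2, ← hc, ← hs]
  have main : (2 * g * q₁ * c ^ 2 * s + p₂ ^ 2 * s / (2 * m ^ 2 * q₁ ^ 2)) * (p₁ / (4 * m))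
      + (g * q₁ ^ 2 * (c ^ 3 / 2 - c * s ^ 2) - p₂ * (p₁ * q₁ * s + 2 * p₂ * c) / (8 * m ^ 2 * q₁))
        * (p₂ / (m * q₁ ^ 2))
      - p₂ * c / (4 * m ^ 2) * (-(p₂ ^ 2 / (m * q₁ ^ 3)) + g * (3 * m - m * (2 * c ^ 2 - 1)))
      - (p₁ * q₁ * c - 4 * p₂ * s) / (4 * m ^ 2 * q₁) * (g * q₁ * (m * (2 * s * c)))
      = g * p₂ * c * (s ^ 2 + c ^ 2 - 1) / m := by
    field_simp
    ring
  rw [main, hs, hc, Real.sin_sq_add_cos_sq]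
  norm_num
end
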